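/- Let n ≥ 1 and let λ, λ̃ ∈ ℝ^{n+1} be vectors of positive rates with λ̃_i ≥ λ_i for all i = 0,...,n and λ̃_k > λ_k for at least one index k. If e ∈ (0,1)^n satisfies the RFM steady-state equations for the rates λ and ẽ ∈ (0,1)^n satisfies the RFM steady-state equations for the rates λ̃, then the steady-state production rates satisfy λ̃_n ẽ_n > λ_n e_n. -/
import Mathlib


open scoped BigOperators

/-- Extended occupancy vector of an RFM chain with `N + 1` sites:
the input value `u` at the left boundary, the state in the middle,
and `0` at the right boundary. -/
noncomputable def rfmExt {N : ℕ} (u : ℝ) (x : Fin (N + 1) → ℝ) : Fin (N + 3) → ℝ :=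
  Fin.cons u (Fin.snoc x 0)

/-- The flow into site `j` (so `j = 0` is the entry flow `λ₀ u (1 - x₁)`,
`j` internal is `λ_j x_j (1 - x_{j+1})` in 1-based notation,
and `j = N + 1` is the exit flow `λ_n x_n`). -/
noncomputable def rfmFlow {N : ℕ} (lam : Fin (N + 2) → ℝ) (u : ℝ)
    (x : Fin (N + 1) → ℝ) (j : Fin (N + 2)) : ℝ :=
  lam j * rfmExt u x j.castSucc * (1 - rfmExt u x j.succ)

/-- The vector field of a single RFMIO chain with input `u`. -/
noncomputable def rfmVF {N : ℕ} (lam : Fin (N + 2) → ℝ) (u : ℝ)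
    (x : Fin (N + 1) → ℝ) (j : Fin (N + 1)) : ℝ :=
  rfmFlow lam u x j.castSucc - rfmFlow lam u x j.succ

/-- The steady-state equations of an RFM chain with input `u`: all flows are equal,
i.e. `λ₀ u (1-e₁) = λ₁ e₁ (1-e₂) = ⋯ = λ_n e_n`. -/
def rfmSS {N : ℕ} (lam : Fin (N + 2) → ℝ) (u : ℝ) (e : Fin (N + 1) → ℝ) : Prop :=
  ∀ j : Fin (N + 1), rfmFlow lam u e j.castSucc = rfmFlow lam u e j.succ

lemma rfmExt_zero {N : ℕ} (u : ℝ) (x : Fin (N + 1) → ℝ) : rfmExt u x 0 = u := rfl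

lemma rfmExt_succ {N : ℕ} (u : ℝ) (x : Fin (N + 1) → ℝ) (i : Fin (N + 2)) :
    rfmExt u x i.succ = (Fin.snoc x 0 : Fin (N+2) → ℝ) i := by
  unfold rfmExt; exact Fin.cons_succ _ _ _

lemma rfmFlow_zero {N : ℕ} (lam : Fin (N + 2) → ℝ) (u : ℝ) (x : Fin (N + 1) → ℝ) :
    rfmFlow lam u x 0 = lam 0 * u * (1 - x 0) := by
  unfold rfmFlow
  rw [show (0 : Fin (N+2)).castSucc = (0 : Fin (N+3)) from rfl, rfmExt_zero, rfmExt_succ]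
  rw [show (0 : Fin (N+2)) = ((0 : Fin (N+1))).castSucc from rfl, Fin.snoc_castSucc]

lemma rfmFlow_succ {N : ℕ} (lam : Fin (N + 2) → ℝ) (u : ℝ) (x : Fin (N + 1) → ℝ)
    (i : Fin (N + 1)) :
    rfmFlow lam u x i.succ
      = lam i.succ * x i * (1 - (Fin.snoc x 0 : Fin (N+2) → ℝ) i.succ) := by
  unfold rfmFlow
  rw [← Fin.succ_castSucc, rfmExt_succ, rfmExt_succ, Fin.snoc_castSucc]

lemma rfmFlow_last {N : ℕ} (lam : Fin (N + 2) → ℝ) (u : ℝ) (x : Fin (N + 1) → ℝ) :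
    rfmFlow lam u x (Fin.last (N+1)) = lam (Fin.last (N+1)) * x (Fin.last N) := by
  rw [show Fin.last (N+1) = (Fin.last N).succ from rfl, rfmFlow_succ,
    show (Fin.last N).succ = Fin.last (N+1) from rfl, Fin.snoc_last]
  ring

lemma rfmSS_flow_eq {N : ℕ} {lam : Fin (N+2) → ℝ} {u : ℝ} {e : Fin (N+1) → ℝ}
    (h : rfmSS lam u e) (j : Fin (N+2)) :
    rfmFlow lam u e j = rfmFlow lam u e (Fin.last (N+1)) := by
  induction j using Fin.reverseInduction with
  | last => rfl
  | cast i ih => rw [h i]; exact ih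

/-- If the rates `λ̃` dominate the rates `λ` componentwise with a
strict increase in at least one component, then the steady-state production rate
strictly increases: `λ̃_n ẽ_n > λ_n e_n`. -/
theorem production_rate_strictly_increasing_in_rates
    (N : ℕ) (lam lamt : Fin (N + 2) → ℝ)
    (hlam : ∀ j, 0 < lam j) (hlamt : ∀ j, 0 < lamt j)
    (hle : ∀ j, lam j ≤ lamt j) (hlt : ∃ k, lam k < lamt k)
    (e et : Fin (N + 1) → ℝ)
    (he : ∀ j, e j ∈ Set.Ioo (0 : ℝ) 1) (het : ∀ j, et j ∈ Set.Ioo (0 : ℝ) 1)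
    (heq : rfmSS lam 1 e) (heqt : rfmSS lamt 1 et) :
    lam (Fin.last (N + 1)) * e (Fin.last N) <
      lamt (Fin.last (N + 1)) * et (Fin.last N) := by
  by_contra hcon
  push_neg at hcon
  -- all flows equal the production rate
  have hfe : ∀ j, rfmFlow lam 1 e j = lam (Fin.last (N+1)) * e (Fin.last N) := fun j => by
    rw [rfmSS_flow_eq heq j, rfmFlow_last]
  have hft : ∀ j, rfmFlow lamt 1 et j = lamt (Fin.last (N+1)) * et (Fin.last N) := fun j => by
    rw [rfmSS_flow_eq heqt j, rfmFlow_last]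
  have h0 : lam 0 * (1 - e 0) = lam (Fin.last (N+1)) * e (Fin.last N) := by
    have := hfe 0; rwa [rfmFlow_zero, mul_one] at this
  have h0t : lamt 0 * (1 - et 0) = lamt (Fin.last (N+1)) * et (Fin.last N) := by
    have := hft 0; rwa [rfmFlow_zero, mul_one] at this
  have hmid : ∀ i : Fin N, lam (i.succ.castSucc) * e i.castSucc * (1 - e i.succ)
      = lam (Fin.last (N+1)) * e (Fin.last N) := by
    intro i
    have := hfe (i.castSucc.succ)
    rw [rfmFlow_succ] at this
    rwa [Fin.succ_castSucc, Fin.snoc_castSucc] at this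
  have hmidt : ∀ i : Fin N, lamt (i.succ.castSucc) * et i.castSucc * (1 - et i.succ)
      = lamt (Fin.last (N+1)) * et (Fin.last N) := by
    intro i
    have := hft (i.castSucc.succ)
    rw [rfmFlow_succ] at this
    rwa [Fin.succ_castSucc, Fin.snoc_castSucc] at this
  -- backward induction: et ≤ e componentwise
  have hback : ∀ i : Fin (N+1), et i ≤ e i := by
    intro i
    induction i using Fin.reverseInduction with
    | last =>
      have h2 : lamt (Fin.last (N+1)) * et (Fin.last N)
          ≤ lamt (Fin.last (N+1)) * e (Fin.last N) := by
        nlinarith [hle (Fin.last (N+1)), (he (Fin.last N)).1, hlamt (Fin.last (N+1)),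
          hlam (Fin.last (N+1))]
      exact le_of_mul_le_mul_left h2 (hlamt _)
    | cast i ih =>
      have h1 := hmid i
      have h2 := hmidt i
      have hp1 : 0 < 1 - e i.succ := by linarith [(he i.succ).2]
      have hp2 : 1 - e i.succ ≤ 1 - et i.succ := by linarith
      have hA : lamt i.succ.castSucc * et i.castSucc * (1 - e i.succ)
          ≤ lamt i.succ.castSucc * et i.castSucc * (1 - et i.succ) :=
        mul_le_mul_of_nonneg_left hp2 (mul_pos (hlamt _) (het i.castSucc).1).le
      have hB : lam i.succ.castSucc * e i.castSucc * (1 - e i.succ)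
          ≤ lamt i.succ.castSucc * e i.castSucc * (1 - e i.succ) :=
        mul_le_mul_of_nonneg_right
          (mul_le_mul_of_nonneg_right (hle _) (he i.castSucc).1.le) hp1.le
      have key : (lamt i.succ.castSucc * et i.castSucc) * (1 - e i.succ)
          ≤ (lamt i.succ.castSucc * e i.castSucc) * (1 - e i.succ) := by
        calc (lamt i.succ.castSucc * et i.castSucc) * (1 - e i.succ)
            ≤ lamt i.succ.castSucc * et i.castSucc * (1 - et i.succ) := hA
          _ = lamt (Fin.last (N+1)) * et (Fin.last N) := h2
          _ ≤ lam (Fin.last (N+1)) * e (Fin.last N) := hcon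
          _ = lam i.succ.castSucc * e i.castSucc * (1 - e i.succ) := h1.symm
          _ ≤ (lamt i.succ.castSucc * e i.castSucc) * (1 - e i.succ) := hB
      have key2 := le_of_mul_le_mul_right key hp1
      exact le_of_mul_le_mul_left key2 (hlamt _)
  -- hence r ≤ rt, so rt = r
  have hle0 : 1 - e 0 ≤ 1 - et 0 := by linarith [hback 0]
  have hrle : lam (Fin.last (N+1)) * e (Fin.last N)
      ≤ lamt (Fin.last (N+1)) * et (Fin.last N) := by
    calc lam (Fin.last (N+1)) * e (Fin.last N) = lam 0 * (1 - e 0) := h0.symm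
      _ ≤ lam 0 * (1 - et 0) := mul_le_mul_of_nonneg_left hle0 (hlam 0).le
      _ ≤ lamt 0 * (1 - et 0) := by
          nlinarith [hle 0, (het 0).2]
      _ = lamt (Fin.last (N+1)) * et (Fin.last N) := h0t
  have hreq : lamt (Fin.last (N+1)) * et (Fin.last N)
      = lam (Fin.last (N+1)) * e (Fin.last N) := le_antisymm hcon hrle
  -- forward: et = e componentwise
  have hfwd : ∀ i : Fin (N+1), et i = e i := by
    intro i
    induction i using Fin.induction with
    | zero =>
      have hA : lam 0 * (1 - et 0) ≤ lamt 0 * (1 - et 0) := by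
        nlinarith [hle 0, (het 0).2]
      have hB : lam 0 * (1 - et 0) ≤ lam 0 * (1 - e 0) := by
        calc lam 0 * (1 - et 0) ≤ lamt 0 * (1 - et 0) := hA
          _ = lamt (Fin.last (N+1)) * et (Fin.last N) := h0t
          _ = lam (Fin.last (N+1)) * e (Fin.last N) := hreq
          _ = lam 0 * (1 - e 0) := h0.symm
      have := le_of_mul_le_mul_left hB (hlam 0)
      have := hback 0
      linarith
    | succ i ih =>
      have h1 := hmid i
      have h2 := hmidt i
      rw [ih] at h2
      have h1' : (0:ℝ) ≤ 1 - et i.succ := by linarith [(het i.succ).2]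
      have hA : (lam i.succ.castSucc * e i.castSucc) * (1 - et i.succ)
          ≤ (lamt i.succ.castSucc * e i.castSucc) * (1 - et i.succ) :=
        mul_le_mul_of_nonneg_right
          (mul_le_mul_of_nonneg_right (hle _) (he i.castSucc).1.le) h1'
      have hB : (lam i.succ.castSucc * e i.castSucc) * (1 - et i.succ)
          ≤ (lam i.succ.castSucc * e i.castSucc) * (1 - e i.succ) := by
        calc (lam i.succ.castSucc * e i.castSucc) * (1 - et i.succ)
            ≤ (lamt i.succ.castSucc * e i.castSucc) * (1 - et i.succ) := hA
          _ = lamt (Fin.last (N+1)) * et (Fin.last N) := h2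
          _ = lam (Fin.last (N+1)) * e (Fin.last N) := hreq
          _ = (lam i.succ.castSucc * e i.castSucc) * (1 - e i.succ) := h1.symm
      have := le_of_mul_le_mul_left hB (mul_pos (hlam _) (he i.castSucc).1)
      have := hback i.succ
      linarith
  have hee : et = e := funext hfwd
  -- the extended vector values are < 1
  have hsnoc : ∀ j : Fin (N+2), (Fin.snoc e 0 : Fin (N+2) → ℝ) j < 1 := by
    intro j
    induction j using Fin.lastCases with
    | last => rw [Fin.snoc_last]; norm_num
    | cast i => rw [Fin.snoc_castSucc]; exact (he i).2
  -- all rates equal: contradiction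
  have hreq' : lamt (Fin.last (N+1)) * e (Fin.last N)
      = lam (Fin.last (N+1)) * e (Fin.last N) := by
    have h := hreq; rw [hfwd (Fin.last N)] at h; exact h
  have hlameq : ∀ j : Fin (N+2), lam j = lamt j := by
    intro j
    induction j using Fin.cases with
    | zero =>
      have h0t' := h0t
      rw [hee] at h0t'
      have hA : lam 0 * (1 - e 0) = lamt 0 * (1 - e 0) := by
        linarith [h0, h0t', hreq']
      exact mul_right_cancel₀ (by linarith [(he 0).2] : (1 : ℝ) - e 0 ≠ 0) hA
    | succ i =>
      have hsi := hfe i.succ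
      rw [rfmFlow_succ] at hsi
      have hsit := hft i.succ
      rw [rfmFlow_succ, hee] at hsit
      have hq : (1 : ℝ) - (Fin.snoc e 0 : Fin (N+2) → ℝ) i.succ ≠ 0 := by
        have := hsnoc i.succ; intro h; linarith
      have hA : lam i.succ * e i * (1 - (Fin.snoc e 0 : Fin (N+2) → ℝ) i.succ)
          = lamt i.succ * e i * (1 - (Fin.snoc e 0 : Fin (N+2) → ℝ) i.succ) := by
        rw [hsi, hsit]; exact hreq'.symm
      have hA2 := mul_right_cancel₀ hq hA
      exact mul_right_cancel₀ (ne_of_gt (he i).1) hA2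
  obtain ⟨k, hk⟩ := hlt
  exact hk.ne (hlameq k)
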